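/- arXiv:1504.06005 — 2 statements merged into one kernel-verified Lean document; each statement's English description precedes it below -/
import Mathlib

section
/- For a ∈ A with free cumulants κ_n(a), the cumulant series c_a(z) = Σ_{n≥1} κ_n(a) z^n satisfies 1 + c_a(z) = z·K_a(z), where K_a is the compositional inverse of the Cauchy transform G_a. -/
/-!
Splitting a non-crossing partition of `{0, …, n}` at the second point `g + 1` of the block of `0`
(`g = n` if `0` is a singleton) leaves an arbitrary non-crossing partition of `{1, …, g}` and a
non-crossing partition of `{g + 1, …, n}` whose first block has absorbed the point `0`. Counting
the points `j` absorbed into the first block turns this into the binary recursion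
`A_j = κ_j + z M A_{j+1}`, solved by `A_j(z) = Σ_k κ_{k+j} (z M(z))^k`; for `j = 0` it gives the
functional equation `M(z) = 1 + c_a(z M(z))` of the moment series `M = Σ φ(aⁿ) zⁿ`.
Substituting the compositional inverse `z / L(z)` of `z M(z)` gives `M(z / L(z)) = 1 + c_a(z)`,
and then `z = (z / L(z)) · M(z / L(z))` forces `L = 1 + c_a`.
-/

open scoped Classical
noncomputable section

/-- Formal composition `f ∘ g` of power series (intended for `g` with zero constant
coefficient, in which case this is the usual substitution of `g` into `f`). -/
def pscomp (f g : PowerSeries ℂ) : PowerSeries ℂ :=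
  PowerSeries.mk fun n => ∑ k ∈ Finset.range (n + 1),
    (PowerSeries.coeff k f) * PowerSeries.coeff n (g ^ k)

/-- The series `Σ_{n ≥ 1} f n · zⁿ` associated to a sequence `f`. -/
def phiSeries (f : ℕ → ℂ) : PowerSeries ℂ :=
  PowerSeries.mk fun n => if n = 0 then 0 else f n

/-- A setoid (partition) is non-crossing with respect to a position key `k`:
there is no crossing `k a < k b < k c < k d` with `a ∼ c`, `b ∼ d`, `a ≁ b`. -/
def NonCrossingOn {α : Type*} (k : α → ℤ) (s : Setoid α) : Prop :=
  ∀ a b c d : α, k a < k b → k b < k c → k c < k d → s.r a c → s.r b d → s.r a b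

/-- Non-crossing partitions of `{1, …, n}` in the usual order. -/
def IsNC {n : ℕ} (s : Setoid (Fin n)) : Prop :=
  NonCrossingOn (fun i => (i.val : ℤ)) s

def half {n : ℕ} (x : Fin (2 * n)) : Fin n := ⟨x.val / 2, by omega⟩

/-- The interleaved partition on `{1, 1', 2, 2', …, n, n'}`: even positions are the
unprimed points, carrying `p`; odd positions are the primed points, carrying `t`. -/
def interleave {n : ℕ} (p t : Setoid (Fin n)) : Setoid (Fin (2 * n)) where
  r x y := x.val % 2 = y.val % 2 ∧ (x.val % 2 = 0 → p.r (half x) (half y)) ∧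
    (x.val % 2 = 1 → t.r (half x) (half y))
  iseqv := by
    refine ⟨fun x => ⟨rfl, fun _ => p.iseqv.refl _, fun _ => t.iseqv.refl _⟩, ?_, ?_⟩
    · rintro x y ⟨h1, h2, h3⟩
      exact ⟨h1.symm, fun h0 => p.iseqv.symm (h2 (h1.trans h0)),
        fun h0 => t.iseqv.symm (h3 (h1.trans h0))⟩
    · rintro x y z ⟨h1, h2, h3⟩ ⟨h1', h2', h3'⟩
      exact ⟨h1.trans h1', fun h0 => p.iseqv.trans (h2 h0) (h2' (h1.symm.trans h0)),
        fun h0 => t.iseqv.trans (h3 h0) (h3' (h1.symm.trans h0))⟩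

/-- The Kreweras complement of `p ∈ NC(n)`: the largest partition `t` of the primed
points such that the interleaving of `p` and `t` is non-crossing on `{1,1',…,n,n'}`. -/
def kreweras {n : ℕ} (p : Setoid (Fin n)) : Setoid (Fin n) :=
  sSup {t | IsNC (interleave p t)}

/-- The blocks of a partition, as a finset of finsets. -/
def blocksOf {n : ℕ} (s : Setoid (Fin n)) : Finset (Finset (Fin n)) :=
  Finset.univ.image fun i => Finset.univ.filter fun j => s.r i j

/-- The value `f(0_n, π) = ∏_{V block of π} f(0_{|V|}, 1_{|V|})` of the multiplicative
function determined by the sequence `f n = f(0_n, 1_n)`. -/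
def fval {n : ℕ} (f : ℕ → ℂ) (s : Setoid (Fin n)) : ℂ :=
  ∏ B ∈ blocksOf s, f B.card

instance setoidFintype (n : ℕ) : Fintype (Setoid (Fin n)) :=
  Fintype.ofInjective (fun s => fun a b : Fin n => decide (s.r a b)) (by
    intro s t h
    apply Setoid.ext
    intro a b
    have := congrFun (congrFun h a) b
    simpa [decide_eq_decide] using this)

/-- Restriction of a partition to a block `B`, relabelled along the order
isomorphism `Fin B.card ≃o B`. -/
def restrictS {n : ℕ} (s : Setoid (Fin n)) (B : Finset (Fin n)) : Setoid (Fin B.card) :=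
  Setoid.comap (fun j => (B.orderIsoOfFin rfl j).val) s

/-- The value on the interval `[ρ, σ]` of the (canonical multiplicative extension of
the) multiplicative function determined by the sequence `f`, via the canonical
decomposition `[ρ, σ] ≅ ∏_{B block of σ} [ρ|_B, 1_B]` and
`f(τ, 1_m) = ∏_{C block of K(τ)} f(0_{|C|}, 1_{|C|})`. -/
def intervalVal {n : ℕ} (f : ℕ → ℂ) (ρ σ : Setoid (Fin n)) : ℂ :=
  ∏ B ∈ blocksOf σ, fval f (kreweras (restrictS ρ B))

section NCPartitions

open Finset

section Blocks

variable {n : ℕ}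

def blockOf (s : Setoid (Fin n)) (x : Fin n) : Finset (Fin n) :=
  Finset.univ.filter fun y => s.r x y

@[simp]
lemma mem_blockOf {s : Setoid (Fin n)} {x y : Fin n} : y ∈ blockOf s x ↔ s x y := by
  simp [blockOf]

lemma blockOf_eq_blockOf_iff {s : Setoid (Fin n)} {x y : Fin n} :
    blockOf s x = blockOf s y ↔ s x y := by
  refine ⟨fun h => mem_blockOf.1 (h ▸ mem_blockOf.2 (s.refl y)),
    fun h => Finset.ext fun z => ?_⟩
  simp only [mem_blockOf]
  exact ⟨s.trans (s.symm h), s.trans h⟩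

def IsBlockMax (s : Setoid (Fin n)) (x : Fin n) : Prop :=
  ∀ y, s x y → y ≤ x

lemma exists_rel_isBlockMax (s : Setoid (Fin n)) (x : Fin n) : ∃ y, s x y ∧ IsBlockMax s y := by
  have hne : (blockOf s x).Nonempty := ⟨x, mem_blockOf.2 (s.refl x)⟩
  have hx : s x ((blockOf s x).max' hne) := mem_blockOf.1 ((blockOf s x).max'_mem hne)
  refine ⟨_, hx, fun z hz => (blockOf s x).le_max' z (mem_blockOf.2 (s.trans hx hz))⟩

lemma fval_eq_prod (κ : ℕ → ℂ) (s : Setoid (Fin n)) :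
    fval κ s = ∏ x, if IsBlockMax s x then κ (blockOf s x).card else 1 := by
  have hblocks : blocksOf s = (univ.filter (IsBlockMax s)).image (blockOf s) := by
    refine Finset.Subset.antisymm (fun B hB => ?_) (image_subset_image (filter_subset _ _))
    obtain ⟨x, -, rfl⟩ := mem_image.1 hB
    obtain ⟨y, hxy, hy⟩ := exists_rel_isBlockMax s x
    exact mem_image.2
      ⟨y, mem_filter.2 ⟨mem_univ y, hy⟩, blockOf_eq_blockOf_iff.2 (s.symm hxy)⟩
  rw [fval, hblocks, prod_image, prod_filter]
  intro x hx y hy hxy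
  simp only [coe_filter, mem_univ, true_and, Set.mem_ofPred_eq] at hx hy
  have hrel := blockOf_eq_blockOf_iff.1 hxy
  exact le_antisymm (hy x (s.symm hrel)) (hx y hrel)

lemma map_blockOf_comap {a : ℕ} {e : Fin a → Fin n} (he : Function.Injective e)
    (s : Setoid (Fin n)) (i : Fin a) :
    (blockOf (s.comap e) i).map ⟨e, he⟩ = (blockOf s (e i)).filter (· ∈ Set.range e) := by
  ext y
  simp only [mem_map, mem_blockOf, Setoid.comap_rel, Function.Embedding.coeFn_mk, mem_filter,
    Set.mem_range]
  exact ⟨fun ⟨i', hi', hy⟩ => ⟨hy ▸ hi', i', hy⟩,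
    fun ⟨hy, i', hi'⟩ => ⟨i', hi' ▸ hy, hi'⟩⟩

lemma card_blockOf_eq_card_blockOf_comap_add {a : ℕ} {e : Fin a → Fin n}
    (he : Function.Injective e) (s : Setoid (Fin n)) (i : Fin a) :
    (blockOf s (e i)).card =
      (blockOf (s.comap e) i).card + ((blockOf s (e i)).filter (· ∉ Set.range e)).card := by
  rw [← card_map ⟨e, he⟩, map_blockOf_comap he, card_filter_add_card_filter_not]

lemma isBlockMax_comap_iff {a : ℕ} {e : Fin a → Fin n} (he : StrictMono e) {s : Setoid (Fin n)}
    {i : Fin a} (hout : ∀ y, s (e i) y → y ∉ Set.range e → y < e i) :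
    IsBlockMax (s.comap e) i ↔ IsBlockMax s (e i) := by
  refine ⟨fun hi y hy => ?_, fun hi i' hi' => he.le_iff_le.1 (hi _ hi')⟩
  by_cases hyr : y ∈ Set.range e
  · obtain ⟨i', rfl⟩ := hyr
    exact he.monotone (hi i' hy)
  · exact (hout y hy hyr).le

def markedFactor (κ : ℕ → ℂ) (j : ℕ) (s : Setoid (Fin n)) (x : Fin n) : ℂ :=
  if IsBlockMax s x then κ ((blockOf s x).card + if s ⟨0, x.pos⟩ x then j else 0) else 1

/-- The weight of `s` after adding `j` points to the block of `0`; for `n = 0` these points form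
a block of their own. -/
def markedWeight (κ : ℕ → ℂ) (j : ℕ) (s : Setoid (Fin n)) : ℂ :=
  (if n = 0 then κ j else 1) * ∏ x, markedFactor κ j s x

lemma markedWeight_zero (κ : ℕ → ℂ) (hn : n ≠ 0) (s : Setoid (Fin n)) :
    markedWeight κ 0 s = fval κ s := by
  simp [markedWeight, markedFactor, hn, fval_eq_prod]

@[simp]
lemma markedWeight_fin_zero (κ : ℕ → ℂ) (j : ℕ) (s : Setoid (Fin 0)) :
    markedWeight κ j s = κ j := by
  simp [markedWeight]

@[simp]
lemma fval_fin_zero (κ : ℕ → ℂ) (s : Setoid (Fin 0)) : fval κ s = 1 := by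
  simp [fval, blocksOf]

end Blocks

section NonCrossing

variable {n : ℕ}

lemma isNC_iff {s : Setoid (Fin n)} :
    IsNC s ↔ ∀ a b c d, a < b → b < c → c < d → s a c → s b d → s a b := by
  simp only [IsNC, NonCrossingOn, Nat.cast_lt, Fin.lt_def]

lemma IsNC.comap {s : Setoid (Fin n)} (hs : IsNC s) {a : ℕ} {e : Fin a → Fin n}
    (he : StrictMono e) : IsNC (s.comap e) := by
  rw [isNC_iff] at hs ⊢
  intro a b c d hab hbc hcd hac hbd
  exact hs _ _ _ _ (he hab) (he hbc) (he hcd) hac hbd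

abbrev NCPartition (n : ℕ) := {s : Setoid (Fin n) // IsNC s}

def moment (κ : ℕ → ℂ) (n : ℕ) : ℂ :=
  ∑ π : NCPartition n, fval κ π.1

def markedMoment (κ : ℕ → ℂ) (j n : ℕ) : ℂ :=
  ∑ π : NCPartition n, markedWeight κ j π.1

instance : Subsingleton (NCPartition 0) :=
  ⟨fun _ _ => Subtype.ext (Setoid.ext fun x => x.elim0)⟩

/-- For non-crossing `s`, `g + 1` is the second point of the block of `0`, or `g + 1 = n` if
that block is `{0}`. -/
def SplitsAt (g : ℕ) (s : Setoid (Fin n)) : Prop :=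
  (∀ x y, s x y → 1 ≤ x.val → x.val ≤ g → 1 ≤ y.val ∧ y.val ≤ g) ∧
    ∀ x y : Fin n, x.val = 0 → y.val = g + 1 → s x y

lemma SplitsAt.unique {s : Setoid (Fin n)} {g g' : ℕ} (h : SplitsAt g s) (h' : SplitsAt g' s)
    (hg : g < n) (hg' : g' < n) : g = g' := by
  by_contra hne
  wlog hlt : g < g' generalizing g g'
  · exact this h' h hg' hg (Ne.symm hne) (by omega)
  have hrel := h.2 ⟨0, by omega⟩ ⟨g + 1, by omega⟩ rfl rfl
  have := h'.1 _ _ (s.symm hrel) (by simp) (by simp; omega)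
  simp at this

lemma IsNC.exists_splitsAt {s : Setoid (Fin n)} (hs : IsNC s) (hn : 0 < n) :
    ∃ g < n, SplitsAt g s := by
  rw [isNC_iff] at hs
  set z : Fin n := ⟨0, hn⟩
  by_cases hex : ∃ k, ∃ hk : k < n, 0 < k ∧ s z ⟨k, hk⟩
  · obtain ⟨hk, hk0, hzk⟩ := Nat.find_spec hex
    set k := Nat.find hex
    have hmin : ∀ x : Fin n, s z x → 0 < x.val → k ≤ x.val := fun x hzx hx =>
      Nat.find_min' hex ⟨x.isLt, hx, hzx⟩
    refine ⟨k - 1, by omega, fun x y hxy hx1 hxg => ?_, fun x y hx hy => ?_⟩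
    · by_contra hy
      have hzx : s z x := by
        rcases Nat.lt_or_ge y.val k with hyk | hyk
        · have hy0 : y = z := Fin.ext (by simp [z]; omega)
          exact s.symm (hy0 ▸ hxy)
        rcases hyk.eq_or_lt with hyk | hyk
        · have hyk' : y = ⟨k, hk⟩ := Fin.ext hyk.symm
          exact s.trans hzk (s.symm (hyk' ▸ hxy))
        exact hs z x ⟨k, hk⟩ y (by simp [Fin.lt_def, z]; omega) (by simp [Fin.lt_def]; omega)
          (by simp [Fin.lt_def]; omega) hzk hxy
      have := hmin x hzx (by omega)
      omega
    · obtain rfl : x = z := Fin.ext hx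
      obtain rfl : y = ⟨k, hk⟩ := Fin.ext (by simp; omega)
      exact hzk
  · push Not at hex
    refine ⟨n - 1, by omega, fun x y hxy hx1 hxg => ⟨?_, by omega⟩,
      fun x y _ hy => by omega⟩
    by_contra hy
    obtain rfl : y = z := Fin.ext (by simp [z]; omega)
    exact hex x.val x.isLt (by omega) (s.symm hxy)

lemma sum_ncPartition_eq_sum_splitsAt {M : Type*} [AddCommMonoid M] (hn : 0 < n)
    (w : Setoid (Fin n) → M) :
    ∑ π : NCPartition n, w π.1 =
      ∑ g ∈ range n, ∑ π : NCPartition n with SplitsAt g π.1, w π.1 := by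
  rw [sum_comm' (t' := univ) (s' := fun π => (range n).filter (SplitsAt · π.1)) (by simp)]
  refine sum_congr rfl fun π _ => ?_
  obtain ⟨g, hg, hsplit⟩ := π.2.exists_splitsAt hn
  have : (range n).filter (SplitsAt · π.1) = {g} := by
    ext g'
    simp only [mem_filter, mem_range, mem_singleton]
    exact ⟨fun ⟨hg', h'⟩ => (hsplit.unique h' hg hg').symm, fun h => h ▸ ⟨hg, hsplit⟩⟩
  rw [this, sum_singleton]

end NonCrossing

section Split

variable {g m : ℕ}

def gapEmb (g m : ℕ) (i : Fin g) : Fin (g + m + 1) := (Fin.castAdd m i).succ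

def tailEmb (g m : ℕ) (k : Fin m) : Fin (g + m + 1) := (Fin.natAdd g k).succ

@[simp]
lemma val_gapEmb (i : Fin g) : (gapEmb g m i).val = i.val + 1 := rfl

@[simp]
lemma val_tailEmb (k : Fin m) : (tailEmb g m k).val = g + k.val + 1 := rfl

lemma gapEmb_strictMono : StrictMono (gapEmb g m) :=
  Fin.strictMono_succ.comp (Fin.strictMono_castAdd m)

lemma tailEmb_strictMono : StrictMono (tailEmb g m) :=
  Fin.strictMono_succ.comp (Fin.strictMono_natAdd g)

lemma prod_fin_eq_zero_mul_gapEmb_mul_tailEmb {M : Type*} [CommMonoid M]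
    (F : Fin (g + m + 1) → M) :
    ∏ x, F x = F 0 * ((∏ i, F (gapEmb g m i)) * ∏ k, F (tailEmb g m k)) := by
  rw [Fin.prod_univ_succ, Fin.prod_univ_add]
  rfl

lemma exists_gapEmb_eq {x : Fin (g + m + 1)} (h1 : 1 ≤ x.val) (hg : x.val ≤ g) :
    ∃ i, x = gapEmb g m i :=
  ⟨⟨x.val - 1, by omega⟩, Fin.ext (by simp; omega)⟩

lemma exists_tailEmb_eq {x : Fin (g + m + 1)} (hg : g < x.val) : ∃ k, x = tailEmb g m k :=
  ⟨⟨x.val - g - 1, by omega⟩, Fin.ext (by simp; omega)⟩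

lemma eq_zero_or_gapEmb_or_tailEmb (x : Fin (g + m + 1)) :
    x = 0 ∨ (∃ i, x = gapEmb g m i) ∨ ∃ k, x = tailEmb g m k := by
  rcases Nat.lt_or_ge x.val 1 with hx | hx
  · exact Or.inl (Fin.ext (by rw [Fin.val_zero]; omega))
  rcases Nat.lt_or_ge x.val (g + 1) with hxg | hxg
  · exact Or.inr (Or.inl (exists_gapEmb_eq hx (by omega)))
  · exact Or.inr (Or.inr (exists_tailEmb_eq (by omega)))

def joinLabel (π₁ : Setoid (Fin g)) (π₂ : Setoid (Fin m)) :
    Fin (g + m + 1) → Option (Quotient π₁ ⊕ Quotient π₂) :=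
  Fin.cases (if h : 0 < m then some (.inr (Quotient.mk π₂ ⟨0, h⟩)) else none)
    (Fin.addCases (fun i => some (.inl (Quotient.mk π₁ i)))
      fun k => some (.inr (Quotient.mk π₂ k)))

/-- The blocks of `π₁` on `1, …, g` and those of `π₂` on `g + 1, …, g + m`, with `0` added to
the block of `g + 1`. -/
def join (π₁ : Setoid (Fin g)) (π₂ : Setoid (Fin m)) : Setoid (Fin (g + m + 1)) :=
  Setoid.ker (joinLabel π₁ π₂)

section join

variable (π₁ : Setoid (Fin g)) (π₂ : Setoid (Fin m))

lemma join_iff {x y : Fin (g + m + 1)} :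
    join π₁ π₂ x y ↔ joinLabel π₁ π₂ x = joinLabel π₁ π₂ y :=
  Iff.rfl

@[simp]
lemma joinLabel_zero :
    joinLabel π₁ π₂ 0 = if h : 0 < m then some (.inr (Quotient.mk π₂ ⟨0, h⟩)) else none :=
  rfl

@[simp]
lemma joinLabel_gapEmb (i : Fin g) :
    joinLabel π₁ π₂ (gapEmb g m i) = some (.inl (Quotient.mk π₁ i)) := by
  simp [joinLabel, gapEmb]

@[simp]
lemma joinLabel_tailEmb (k : Fin m) :
    joinLabel π₁ π₂ (tailEmb g m k) = some (.inr (Quotient.mk π₂ k)) := by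
  simp [joinLabel, tailEmb]

lemma comap_gapEmb_join : (join π₁ π₂).comap (gapEmb g m) = π₁ :=
  Setoid.ext fun i i' => by simp [join_iff, Setoid.comap_rel, Quotient.eq]

lemma comap_tailEmb_join : (join π₁ π₂).comap (tailEmb g m) = π₂ :=
  Setoid.ext fun k k' => by simp [join_iff, Setoid.comap_rel, Quotient.eq]

lemma splitsAt_join : SplitsAt g (join π₁ π₂) := by
  refine ⟨fun x y hxy hx1 hxg => ?_, fun x y hx hy => ?_⟩
  · obtain ⟨i, rfl⟩ := exists_gapEmb_eq hx1 hxg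
    rcases eq_zero_or_gapEmb_or_tailEmb y with rfl | ⟨i', rfl⟩ | ⟨k, rfl⟩
    · simp [join_iff] at hxy
    · simp
    · simp [join_iff] at hxy
  · have hm : 0 < m := by omega
    obtain rfl : x = 0 := Fin.ext hx
    obtain rfl : y = tailEmb g m ⟨0, hm⟩ := Fin.ext (by simp [hy])
    simp [join_iff, hm]

end join

variable {σ : Setoid (Fin (g + m + 1))}

lemma SplitsAt.not_rel_gapEmb_zero (h : SplitsAt g σ) (i : Fin g) :
    ¬σ (gapEmb g m i) 0 := fun hrel => by
  have := h.1 _ _ hrel (by simp) (by simp)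
  simp at this

lemma SplitsAt.not_rel_gapEmb_tailEmb (h : SplitsAt g σ) (i : Fin g) (k : Fin m) :
    ¬σ (gapEmb g m i) (tailEmb g m k) := fun hrel => by
  have := h.1 _ _ hrel (by simp) (by simp)
  simp at this

lemma SplitsAt.rel_zero_tailEmb (h : SplitsAt g σ) (hm : 0 < m) :
    σ 0 (tailEmb g m ⟨0, hm⟩) :=
  h.2 _ _ rfl rfl

lemma SplitsAt.eq_join (h : SplitsAt g σ) :
    σ = join (σ.comap (gapEmb g m)) (σ.comap (tailEmb g m)) := by
  ext x y
  rcases eq_zero_or_gapEmb_or_tailEmb x with rfl | ⟨i, rfl⟩ | ⟨k, rfl⟩ <;>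
  rcases eq_zero_or_gapEmb_or_tailEmb y with rfl | ⟨i', rfl⟩ | ⟨k', rfl⟩ <;>
    simp only [join_iff, joinLabel_zero, joinLabel_gapEmb, joinLabel_tailEmb, Setoid.comap_rel,
      Setoid.refl, Option.dite_none_right_eq_some, Option.some_eq_dite_none_right,
      Option.some.injEq, Sum.inl.injEq, Sum.inr.injEq, Quotient.eq, reduceCtorEq, exists_false,
      iff_false]
  · exact fun hr => h.not_rel_gapEmb_zero _ (σ.symm hr)
  · exact ⟨fun hr => ⟨k'.pos, σ.trans (σ.symm (h.rel_zero_tailEmb _)) hr⟩,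
      fun ⟨hm, hr⟩ => σ.trans (h.rel_zero_tailEmb hm) hr⟩
  · exact h.not_rel_gapEmb_zero _
  · exact h.not_rel_gapEmb_tailEmb _ _
  · exact ⟨fun hr => ⟨k.pos, σ.trans hr (h.rel_zero_tailEmb _)⟩,
      fun ⟨hm, hr⟩ => σ.trans hr (σ.symm (h.rel_zero_tailEmb hm))⟩
  · exact fun hr => h.not_rel_gapEmb_tailEmb _ _ (σ.symm hr)

lemma SplitsAt.isNC (h : SplitsAt g σ)
    (h₁ : IsNC (σ.comap (gapEmb g m))) (h₂ : IsNC (σ.comap (tailEmb g m))) : IsNC σ := by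
  rw [isNC_iff] at h₁ h₂ ⊢
  intro a b c d hab hbc hcd hac hbd
  have hgap : ∀ x y, σ x y → (1 ≤ x.val ∧ x.val ≤ g ↔ 1 ≤ y.val ∧ y.val ≤ g) :=
    fun x y hxy => ⟨fun hx => h.1 x y hxy hx.1 hx.2, fun hy => h.1 y x (σ.symm hxy) hy.1 hy.2⟩
  rw [Fin.lt_def] at hab hbc hcd
  by_cases ha : 1 ≤ a.val ∧ a.val ≤ g
  · have hc := (hgap a c hac).1 ha
    obtain ⟨hd1, hdg⟩ := (hgap b d hbd).1 (by omega)
    obtain ⟨a, rfl⟩ := exists_gapEmb_eq ha.1 ha.2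
    obtain ⟨b, rfl⟩ := exists_gapEmb_eq (m := m) (x := b) (by omega) (by omega)
    obtain ⟨c, rfl⟩ := exists_gapEmb_eq hc.1 hc.2
    obtain ⟨d, rfl⟩ := exists_gapEmb_eq hd1 hdg
    simp only [val_gapEmb] at hab hbc hcd
    exact h₁ a b c d (Fin.lt_def.2 (by omega)) (Fin.lt_def.2 (by omega)) (Fin.lt_def.2 (by omega))
      hac hbd
  have hc : g < c.val := by have := (hgap a c hac).not.1 ha; omega
  have hb : g < b.val := by have := (hgap b d hbd).not.2 (by omega); omega
  -- `0` may be replaced by `g + 1`, the next point of its block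
  obtain ⟨a₀, haa₀, ha₀, ha₀b⟩ :
      ∃ a₀ : Fin (g + m + 1), σ a a₀ ∧ g < a₀.val ∧ a₀.val ≤ b.val := by
    rcases Nat.eq_zero_or_pos a.val with ha0 | ha0
    · exact ⟨⟨g + 1, by omega⟩, h.2 _ _ ha0 rfl, by simp, by simp; omega⟩
    · exact ⟨a, σ.refl a, by omega, by omega⟩
  rcases ha₀b.eq_or_lt with ha₀b | ha₀b
  · exact Fin.ext ha₀b ▸ haa₀
  obtain ⟨a₀, rfl⟩ := exists_tailEmb_eq ha₀
  obtain ⟨b, rfl⟩ := exists_tailEmb_eq hb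
  obtain ⟨c, rfl⟩ := exists_tailEmb_eq hc
  obtain ⟨d, rfl⟩ := exists_tailEmb_eq (m := m) (x := d) (by omega)
  simp only [val_tailEmb] at hbc hcd ha₀b
  exact σ.trans haa₀ (h₂ a₀ b c d (Fin.lt_def.2 (by omega)) (Fin.lt_def.2 (by omega))
    (Fin.lt_def.2 (by omega)) (σ.trans (σ.symm haa₀) hac) hbd)

section weight

variable (κ : ℕ → ℂ) (j : ℕ)

lemma SplitsAt.markedFactor_gapEmb (h : SplitsAt g σ) (i : Fin g) :
    markedFactor κ j σ (gapEmb g m i) =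
      if IsBlockMax (σ.comap (gapEmb g m)) i then κ (blockOf (σ.comap (gapEmb g m)) i).card
      else 1 := by
  have hrange : ∀ y, σ (gapEmb g m i) y → y ∈ Set.range (gapEmb g m) := fun y hy => by
    obtain ⟨hy1, hyg⟩ := h.1 _ y hy (by simp) (by simp)
    obtain ⟨i', rfl⟩ := exists_gapEmb_eq hy1 hyg
    exact ⟨i', rfl⟩
  have hcard := card_blockOf_eq_card_blockOf_comap_add gapEmb_strictMono.injective σ i
  rw [filter_false_of_mem fun y hy => not_not.2 (hrange y (mem_blockOf.1 hy)), card_empty,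
    add_zero] at hcard
  have hzero : ¬σ ⟨0, (gapEmb g m i).pos⟩ (gapEmb g m i) := fun hr =>
    h.not_rel_gapEmb_zero i (σ.symm (Fin.mk_zero ▸ hr))
  rw [markedFactor,
    isBlockMax_comap_iff gapEmb_strictMono fun y hy hy' => absurd (hrange y hy) hy', hcard,
    if_neg hzero, add_zero]

lemma SplitsAt.eq_zero_of_rel_tailEmb (h : SplitsAt g σ) {k : Fin m} {y : Fin (g + m + 1)}
    (hy : σ (tailEmb g m k) y) (hy' : y ∉ Set.range (tailEmb g m)) : y = 0 := by
  rcases eq_zero_or_gapEmb_or_tailEmb y with rfl | ⟨i, rfl⟩ | ⟨k', rfl⟩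
  · rfl
  · exact absurd (σ.symm hy) (h.not_rel_gapEmb_tailEmb i k)
  · exact absurd ⟨k', rfl⟩ hy'

lemma SplitsAt.card_blockOf_tailEmb (h : SplitsAt g σ) (k : Fin m) :
    (blockOf σ (tailEmb g m k)).card =
      (blockOf (σ.comap (tailEmb g m)) k).card + if σ 0 (tailEmb g m k) then 1 else 0 := by
  have hfilter : (blockOf σ (tailEmb g m k)).filter (· ∉ Set.range (tailEmb g m)) =
      if σ 0 (tailEmb g m k) then {0} else ∅ := by
    ext y
    simp only [mem_filter, mem_blockOf]
    constructor
    · rintro ⟨hy, hy'⟩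
      obtain rfl := h.eq_zero_of_rel_tailEmb hy hy'
      simp [σ.symm hy]
    · split_ifs with h0 <;> simp only [mem_singleton, notMem_empty, IsEmpty.forall_iff]
      rintro rfl
      exact ⟨σ.symm h0, fun ⟨k', hk'⟩ => by simp [Fin.ext_iff] at hk'⟩
  rw [card_blockOf_eq_card_blockOf_comap_add tailEmb_strictMono.injective, hfilter,
    apply_ite card, card_singleton, card_empty]

lemma SplitsAt.markedFactor_tailEmb (h : SplitsAt g σ) (k : Fin m) :
    markedFactor κ j σ (tailEmb g m k) = markedFactor κ (j + 1) (σ.comap (tailEmb g m)) k := by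
  have hzero : σ.comap (tailEmb g m) ⟨0, k.pos⟩ k ↔ σ 0 (tailEmb g m k) :=
    ⟨σ.trans (h.rel_zero_tailEmb _), σ.trans (σ.symm (h.rel_zero_tailEmb _))⟩
  have hmax := isBlockMax_comap_iff (s := σ) (i := k) tailEmb_strictMono fun y hy hy' => by
    rw [h.eq_zero_of_rel_tailEmb hy hy', Fin.lt_def]
    simp
  rw [markedFactor, markedFactor, ← hmax, h.card_blockOf_tailEmb, Fin.mk_zero, hzero]
  split_ifs <;> simp only [add_zero, add_assoc, add_comm 1]

lemma SplitsAt.markedWeight_eq (h : SplitsAt g σ) :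
    markedWeight κ j σ =
      fval κ (σ.comap (gapEmb g m)) * markedWeight κ (j + 1) (σ.comap (tailEmb g m)) := by
  rw [markedWeight, if_neg (Nat.succ_ne_zero _), one_mul, prod_fin_eq_zero_mul_gapEmb_mul_tailEmb]
  simp only [h.markedFactor_gapEmb, h.markedFactor_tailEmb, ← fval_eq_prod]
  rcases Nat.eq_zero_or_pos m with rfl | hm
  · have hblock : blockOf σ 0 = {0} := by
      ext y
      rcases eq_zero_or_gapEmb_or_tailEmb (m := 0) y with rfl | ⟨i, rfl⟩ | ⟨k, -⟩
      · simp
      · simpa [Fin.ext_iff] using fun hr => h.not_rel_gapEmb_zero i (σ.symm hr)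
      · exact k.elim0
    have hmax : IsBlockMax σ 0 := fun y hy => (mem_singleton.1 (hblock ▸ mem_blockOf.2 hy)).le
    simp [markedFactor, markedWeight, hmax, hblock, add_comm j, mul_comm]
  · have hzero : markedFactor κ j σ 0 = 1 := if_neg fun hmax => by
      have := hmax _ (h.rel_zero_tailEmb hm)
      rw [Fin.le_def] at this
      simp at this
    rw [hzero, markedWeight, if_neg hm.ne', one_mul, one_mul, mul_comm]

end weight

lemma sum_splitsAt_markedWeight (κ : ℕ → ℂ) (j g m : ℕ) :
    ∑ π : NCPartition (g + m + 1) with SplitsAt g π.1, markedWeight κ j π.1 =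
      moment κ g * markedMoment κ (j + 1) m := by
  rw [moment, markedMoment, Fintype.sum_mul_sum, ← Fintype.sum_prod_type']
  refine sum_nbij'
    (fun π => (⟨π.1.comap (gapEmb g m), π.2.comap gapEmb_strictMono⟩,
      ⟨π.1.comap (tailEmb g m), π.2.comap tailEmb_strictMono⟩))
    (fun p => ⟨join p.1.1 p.2.1, (splitsAt_join _ _).isNC
      (by rw [comap_gapEmb_join]; exact p.1.2) (by rw [comap_tailEmb_join]; exact p.2.2)⟩)
    (by simp) (fun p _ => by simp [splitsAt_join])
    (fun π hπ => Subtype.ext (mem_filter.1 hπ).2.eq_join.symm)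
    (fun p _ => by simp [comap_gapEmb_join, comap_tailEmb_join])
    (fun π hπ => (mem_filter.1 hπ).2.markedWeight_eq κ j)

end Split

lemma moment_zero (κ : ℕ → ℂ) : moment κ 0 = 1 := by
  rw [moment, Fintype.sum_subsingleton _ ⟨⊥, fun a => a.elim0⟩, fval_fin_zero]

lemma markedMoment_zero_right (κ : ℕ → ℂ) (j : ℕ) : markedMoment κ j 0 = κ j := by
  rw [markedMoment, Fintype.sum_subsingleton _ ⟨⊥, fun a => a.elim0⟩, markedWeight_fin_zero]

lemma markedMoment_zero_left (κ : ℕ → ℂ) {n : ℕ} (hn : n ≠ 0) :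
    markedMoment κ 0 n = moment κ n :=
  sum_congr rfl fun π _ => markedWeight_zero κ hn π.1

lemma markedMoment_succ (κ : ℕ → ℂ) (j n : ℕ) :
    markedMoment κ j (n + 1) =
      ∑ p ∈ antidiagonal n, moment κ p.1 * markedMoment κ (j + 1) p.2 := by
  rw [markedMoment, sum_ncPartition_eq_sum_splitsAt n.succ_pos,
    Nat.sum_antidiagonal_eq_sum_range_succ_mk]
  refine sum_congr rfl fun g hg => ?_
  obtain ⟨m, rfl⟩ : ∃ m, n = g + m := ⟨n - g, by simp at hg; omega⟩
  rw [Nat.add_sub_cancel_left, sum_splitsAt_markedWeight]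

end NCPartitions

open PowerSeries

lemma pscomp_eq_subst (f : PowerSeries ℂ) {g : PowerSeries ℂ} (hg : constantCoeff g = 0) :
    pscomp f g = f.subst g := by
  ext n
  rw [pscomp, coeff_mk, coeff_subst' (HasSubst.of_constantCoeff_zero' hg)]
  refine (finsum_eq_sum_of_support_subset _ fun k hk => ?_).symm
  simp only [Finset.coe_range, Set.mem_Iio]
  by_contra! hnk
  refine hk ?_
  have : (X : PowerSeries ℂ) ^ k ∣ g ^ k := pow_dvd_pow_of_dvd (X_dvd_iff.2 hg) k
  simp [X_pow_dvd_iff.1 this n (by omega)]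

lemma eq_zero_of_forall_eq_X_mul_mul_succ {R : Type*} [CommSemiring R] {D : ℕ → PowerSeries R}
    (u : PowerSeries R) (hD : ∀ j, D j = X * u * D (j + 1)) (j : ℕ) : D j = 0 := by
  have hdvd : ∀ k j, (X : PowerSeries R) ^ k ∣ D j := by
    intro k
    induction k with
    | zero => simp
    | succ k ih =>
      intro j
      rw [hD j, pow_succ', mul_assoc]
      exact mul_dvd_mul_left X (dvd_mul_of_dvd_right (ih _) _)
  ext n
  simpa using X_pow_dvd_iff.1 (hdvd (n + 1) j) n (by omega)

lemma mk_markedMoment (κ : ℕ → ℂ) (j : ℕ) :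
    mk (markedMoment κ j) = C (κ j) + X * (mk (moment κ) * mk (markedMoment κ (j + 1))) := by
  ext n
  cases n with
  | zero => simp [markedMoment_zero_right]
  | succ n =>
    rw [coeff_mk, markedMoment_succ, map_add, coeff_C, if_neg n.succ_ne_zero, zero_add,
      coeff_succ_X_mul, coeff_mul]
    simp

lemma mk_markedMoment_eq_subst (κ : ℕ → ℂ) (j : ℕ) :
    mk (markedMoment κ j) = (mk fun k => κ (k + j)).subst (X * mk (moment κ)) := by
  have hu : HasSubst (X * mk (moment κ)) := HasSubst.of_constantCoeff_zero' (by simp)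
  have hshift : ∀ j, (mk fun k => κ (k + j)) = C (κ j) + X * mk fun k => κ (k + (j + 1)) := by
    intro j
    ext n
    cases n with
    | zero => simp
    | succ n => simp [add_assoc, add_comm 1]
  refine sub_eq_zero.1 (eq_zero_of_forall_eq_X_mul_mul_succ
    (D := fun j => mk (markedMoment κ j) - (mk fun k => κ (k + j)).subst (X * mk (moment κ)))
    (mk (moment κ)) (fun j => ?_) j)
  have hC : (MvPowerSeries.C (κ j) : PowerSeries ℂ) = C (κ j) := rfl
  rw [mk_markedMoment, hshift, subst_add hu, subst_mul hu, subst_X hu, subst_C, hC]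
  ring

lemma mk_moment_eq_subst (κ : ℕ → ℂ) :
    mk (moment κ) = (1 + phiSeries κ).subst (X * mk (moment κ)) := by
  have hu : HasSubst (X * mk (moment κ)) := HasSubst.of_constantCoeff_zero' (by simp)
  have hseries : 1 + phiSeries κ = mk κ + C (1 - κ 0) := by
    ext n
    cases n with
    | zero => simp [phiSeries]
    | succ n => simp [phiSeries]
  have hC : (MvPowerSeries.C (1 - κ 0) : PowerSeries ℂ) = C (1 - κ 0) := rfl
  have hmarked := mk_markedMoment_eq_subst κ 0
  simp only [add_zero] at hmarked
  rw [hseries, subst_add hu, subst_C, hC, ← hmarked]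
  ext n
  cases n with
  | zero => simp [moment_zero, markedMoment_zero_right]
  | succ n => simp [markedMoment_zero_left κ n.succ_ne_zero]

/-- With `F(w) = w · h(w) = G_a(1 / w)`, the relation `hK` says `F(z / L(z)) = z`, that is
`G_a(K_a(z)) = z` for `K_a(z) = L(z) / z`. -/
theorem one_add_cumulant_series_eq_general
    (A : Type*) [Ring A] [Algebra ℂ A] (φ : A →ₗ[ℂ] ℂ) (a : A)
    (κ : ℕ → ℂ)
    (hMC : ∀ n : ℕ, φ (a ^ n) = ∑ π : {s : Setoid (Fin n) // IsNC s}, fval κ π.1)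
    (h L : PowerSeries ℂ)
    (hh : h = PowerSeries.mk fun n => φ (a ^ n))
    (hL1 : PowerSeries.constantCoeff L = 1)
    (hK : pscomp (PowerSeries.X * h) (PowerSeries.X * L⁻¹) = PowerSeries.X) :
    1 + phiSeries κ = L := by
  have hv : HasSubst (X * L⁻¹) := HasSubst.of_constantCoeff_zero' (by simp)
  have hM : h = (1 + phiSeries κ).subst (X * h) := by
    rw [hh.trans (congrArg mk (funext hMC))]
    exact mk_moment_eq_subst κ
  rw [pscomp_eq_subst _ (by simp)] at hK
  have hcomp : h.subst (X * L⁻¹) = 1 + phiSeries κ := by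
    conv_lhs => rw [hM]
    rw [subst_comp_subst_apply (HasSubst.of_constantCoeff_zero' (by simp)) hv, hK, X_subst]
  have hX : X * (L⁻¹ * (1 + phiSeries κ)) = X * 1 := calc
    _ = (X : PowerSeries ℂ).subst (X * L⁻¹) * h.subst (X * L⁻¹) := by
      rw [subst_X hv, hcomp, mul_assoc]
    _ = X * 1 := by rw [← subst_mul hv, hK, mul_one]
  have hinv : L⁻¹ * (1 + phiSeries κ) = 1 := mul_left_cancel₀ X_ne_zero hX
  calc 1 + phiSeries κ = L * (L⁻¹ * (1 + phiSeries κ)) := by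
        rw [← mul_assoc, PowerSeries.mul_inv_cancel L (by simp [hL1]), one_mul]
    _ = L := by rw [hinv, mul_one]

/-- For `a ∈ A` with free cumulants `κ_n(a)` (defined by the
moment–cumulant relation `φ(aⁿ) = Σ_{π ∈ NC(n)} ∏_{V block of π} κ_{|V|}(a)`), the
cumulant series `c_a(z) = Σ_{n≥1} κ_n(a) zⁿ` satisfies `1 + c_a(z) = z·K_a(z)`, where
`K_a` is the compositional inverse of the Cauchy transform `G_a`.

`K_a` is encoded by `L(z) = z·K_a(z)` as in the relation `hK` (cf. Statement 0). -/
theorem one_add_cumulant_series_eq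
    (A : Type*) [Ring A] [Algebra ℂ A] (φ : A →ₗ[ℂ] ℂ) (hφ1 : φ 1 = 1) (a : A)
    (κ : ℕ → ℂ)
    (hMC : ∀ n : ℕ, φ (a ^ n) = ∑ π : {s : Setoid (Fin n) // IsNC s}, fval κ π.1)
    (h L : PowerSeries ℂ)
    (hh : h = PowerSeries.mk fun n => φ (a ^ n))
    (hL1 : PowerSeries.constantCoeff L = 1)
    (hK : pscomp (PowerSeries.X * h) (PowerSeries.X * L⁻¹) = PowerSeries.X) :
    1 + phiSeries κ = L :=
  one_add_cumulant_series_eq_general A φ a κ hMC h L hh hL1 hK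

end
end

section
/- If a, b ∈ A satisfy φ(a^n b^m) = φ(a^n)φ(b^m) for all n, m ≥ 0, φ(b) ≠ 0, then all mixed (ℓ,r)-cumulants κ_{n,m}(a,b) with n, m ≥ 1 vanish, hence K_{a,b}(z,w) = 0 and T_{a,b}(z,w) = 1. -/
open scoped Classical
noncomputable section

def mvMk (f : (Fin 2 →₀ ℕ) → ℂ) : MvPowerSeries (Fin 2) ℂ := f

/-- Formal substitution `F(g₀, g₁)` of two series (with zero constant coefficient)
into a two-variable formal power series `F`. -/
def mvcomp (F : MvPowerSeries (Fin 2) ℂ) (g0 g1 : MvPowerSeries (Fin 2) ℂ) :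
    MvPowerSeries (Fin 2) ℂ :=
  mvMk fun d => ∑ p ∈ Finset.range (d 0 + d 1 + 1) ×ˢ Finset.range (d 0 + d 1 + 1),
    (MvPowerSeries.coeff (Finsupp.single 0 p.1 + Finsupp.single 1 p.2) F) *
      MvPowerSeries.coeff d (g0 ^ p.1 * g1 ^ p.2)

/-- A one-variable power series `p(z)` viewed as the two-variable series `p(z)`. -/
def toMv0 (p : PowerSeries ℂ) : MvPowerSeries (Fin 2) ℂ :=
  mvMk fun d => if d 1 = 0 then PowerSeries.coeff (d 0) p else 0

/-- A one-variable power series `p(w)` viewed as the two-variable series `p(w)`. -/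
def toMv1 (p : PowerSeries ℂ) : MvPowerSeries (Fin 2) ℂ :=
  mvMk fun d => if d 0 = 0 then PowerSeries.coeff (d 1) p else 0

/-- The position key inducing the bi-non-crossing order determined by
`χ : {1,…,m} → {ℓ,r}` (`true` = left): left indices first in increasing order,
followed by the right indices in decreasing order. -/
def biKey {m : ℕ} (χ : Fin m → Bool) (i : Fin m) : ℤ :=
  if χ i then (i.val : ℤ) else 2 * m - i.val

/-- The moment–cumulant relation defining the `(ℓ,r)`-cumulant functionals `κ`:
for every `χ` and every tuple, the joint moment is the sum over all bi-non-crossing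
partitions of the products of cumulants over blocks (blocks are restricted in the
induced order). -/
def BiMomCum {A : Type*} [Ring A] [Algebra ℂ A] (φ : A →ₗ[ℂ] ℂ)
    (κ : ∀ m : ℕ, (Fin m → Bool) → (Fin m → A) → ℂ) : Prop :=
  ∀ (m : ℕ) (χ : Fin m → Bool) (x : Fin m → A),
    φ (List.ofFn x).prod =
      ∑ π : {s : Setoid (Fin m) // NonCrossingOn (biKey χ) s},
        ∏ B ∈ blocksOf π.1,
          κ B.card (fun j => χ (B.orderIsoOfFin rfl j).val)
            (fun j => x (B.orderIsoOfFin rfl j).val)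

/-- The `(ℓ,r)`-cumulant `κ_{n,m}(a,b)`, with `n` left entries `a` and `m` right
entries `b`. -/
def kappaNM {A : Type*} (κ : ∀ m : ℕ, (Fin m → Bool) → (Fin m → A) → ℂ) (a b : A)
    (n m : ℕ) : ℂ :=
  κ (n + m) (fun i => decide (i.val < n)) (fun i => if i.val < n then a else b)

/-- The two-variable series `K_{a,b}(z,w) = Σ_{n,m ≥ 1} κ_{n,m}(a,b) zⁿ wᵐ`. -/
def KabSeries {A : Type*} (κ : ∀ m : ℕ, (Fin m → Bool) → (Fin m → A) → ℂ) (a b : A) :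
    MvPowerSeries (Fin 2) ℂ :=
  mvMk fun d => if 1 ≤ d 0 ∧ 1 ≤ d 1 then kappaNM κ a b (d 0) (d 1) else 0

/-- The free cumulant sequence `n ↦ κ_n(a)` of a single left variable `a`
(the `(ℓ,r)`-cumulants with all entries on the left). -/
def leftCumSeq {A : Type*} (κ : ∀ m : ℕ, (Fin m → Bool) → (Fin m → A) → ℂ) (a : A) :
    ℕ → ℂ := fun n => κ n (fun _ => true) (fun _ => a)

/-- The free cumulant sequence `n ↦ κ_n(b)` of a single right variable `b`. -/
def rightCumSeq {A : Type*} (κ : ∀ m : ℕ, (Fin m → Bool) → (Fin m → A) → ℂ) (b : A) :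
    ℕ → ℂ := fun n => κ n (fun _ => false) (fun _ => b)

/-! For the colouring `ℓⁿrᵐ` the bi-non-crossing order lists the `a`'s first and then the
`b`'s in reverse, so a bi-non-crossing partition either splits into a non-crossing partition
of the `a`'s and one of the `b`'s, or has a block meeting both halves. The split partitions
contribute `φ(aⁿ)φ(bᵐ)`. By strong induction on `n + m`, every block meeting both halves,
other than the whole set, carries a vanishing mixed cumulant, so the remaining partitions
contribute exactly `κ_{n,m}(a,b)`. Hence `φ(aⁿbᵐ) = φ(aⁿ)φ(bᵐ) + κ_{n,m}(a,b)`, and the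
factorization forces `κ_{n,m}(a,b) = 0`. -/

open Finset

theorem Fin.antitone_bool_eq_decide_lt {k : ℕ} {c : Fin k → Bool} (hc : Antitone c)
    (j : Fin k) : c j = decide (j.val < #{i | c i}) := by
  have hlow {i j : Fin k} (hij : i ≤ j) (hj : c j) : c i := Bool.le_iff_imp.mp (hc hij) hj
  by_cases hj : c j
  · have := card_le_card (s := Iic j) (t := {i | c i}) fun i hi => by
      simpa using hlow (mem_Iic.mp hi) hj
    rw [Fin.card_Iic] at this
    rw [hj, eq_comm, decide_eq_true_eq]
    omega
  · have := card_le_card (s := {i | c i}) (t := Iio j) fun i hi => by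
      simp only [mem_filter, mem_univ, true_and] at hi
      exact mem_Iio.mpr (lt_of_not_ge fun hji => hj (hlow hji hi))
    rw [Fin.card_Iio] at this
    simpa [hj] using this

@[simp]
theorem Fin.castAdd_ne_natAdd {n m : ℕ} (i : Fin n) (j : Fin m) :
    Fin.castAdd m i ≠ Fin.natAdd n j := by
  simp only [ne_eq, Fin.ext_iff, Fin.val_castAdd, Fin.val_natAdd]
  omega

@[simp]
theorem Fin.natAdd_ne_castAdd {n m : ℕ} (i : Fin m) (j : Fin n) :
    Fin.natAdd n i ≠ Fin.castAdd m j :=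
  (Fin.castAdd_ne_natAdd j i).symm

theorem List.prod_ofFn_ite_lt {M : Type*} [Monoid M] (a b : M) (n m : ℕ) :
    (List.ofFn fun i : Fin (n + m) => if i.val < n then a else b).prod = a ^ n * b ^ m := by
  simp [List.ofFn_add]

section Cumulants

variable {A : Type*} (κ : ∀ m : ℕ, (Fin m → Bool) → (Fin m → A) → ℂ)

theorem kappa_congr_cast {M M' : ℕ} (h : M = M') {c : Fin M → Bool} {y : Fin M → A}
    {c' : Fin M' → Bool} {y' : Fin M' → A} (hc : ∀ j, c j = c' (Fin.cast h j))
    (hy : ∀ j, y j = y' (Fin.cast h j)) :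
    κ M c y = κ M' c' y' := by
  subst h
  congr <;> funext j <;> simp [hc, hy]

theorem kappa_antitone_eq_kappaNM (a b : A) {k : ℕ} {c : Fin k → Bool} (hc : Antitone c) :
    κ k c (fun j => if c j then a else b) = kappaNM κ a b #{j | c j} (k - #{j | c j}) := by
  have hk : k = #{j | c j} + (k - #{j | c j}) := by
    have := card_le_univ (s := ({j | c j} : Finset (Fin k)))
    rw [Fintype.card_fin] at this
    omega
  refine kappa_congr_cast κ hk (fun j => ?_) (fun j => ?_) <;>
    rw [Fin.antitone_bool_eq_decide_lt hc j] <;> simp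

/-- The factor of the block `B` in `BiMomCum`. -/
def blockCum {M : ℕ} (χ : Fin M → Bool) (x : Fin M → A) (B : Finset (Fin M)) : ℂ :=
  κ #B (fun j => χ (B.orderEmbOfFin rfl j)) (fun j => x (B.orderEmbOfFin rfl j))

theorem blockCum_univ {M : ℕ} (χ : Fin M → Bool) (x : Fin M → A) :
    blockCum κ χ x univ = κ M χ x := by
  have hM : #(univ : Finset (Fin M)) = M := card_fin M
  have he : ⇑(univ.orderEmbOfFin rfl) = Fin.cast hM :=
    (orderEmbOfFin_unique rfl (fun _ => mem_univ _) (Fin.cast_strictMono hM)).symm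
  exact kappa_congr_cast κ hM (fun j => by rw [he]) (fun j => by rw [he])

theorem blockCum_eq_of_forall_mem {M k : ℕ} {χ : Fin M → Bool} {x : Fin M → A}
    {B : Finset (Fin M)} (hB : #B = k) {c₀ : Bool} {x₀ : A} (hχ : ∀ i ∈ B, χ i = c₀)
    (hx : ∀ i ∈ B, x i = x₀) :
    blockCum κ χ x B = κ k (fun _ => c₀) (fun _ => x₀) :=
  kappa_congr_cast κ hB (fun _ => hχ _ (orderEmbOfFin_mem _ _ _))
    (fun _ => hx _ (orderEmbOfFin_mem _ _ _))

variable (a b : A)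

theorem blockCum_eq_zero_of_mixed {M N n : ℕ}
    (hsmall : ∀ n' m', 1 ≤ n' → 1 ≤ m' → n' + m' < N → kappaNM κ a b n' m' = 0)
    {B : Finset (Fin M)} (hB : #B < N) (hl : ∃ i ∈ B, i.val < n)
    (hr : ∃ i ∈ B, n ≤ i.val) :
    blockCum κ (fun i => decide (i.val < n)) (fun i => if i.val < n then a else b) B = 0 := by
  set e := B.orderEmbOfFin rfl
  set c : Fin #B → Bool := fun j => decide ((e j).val < n)
  -- along `B` the colours still read `ℓ…ℓ r…r`, so the factor is a mixed cumulant
  have hc : Antitone c := fun i j hij => Bool.le_iff_imp.mpr fun hj => by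
    have : e i ≤ e j := e.monotone hij
    simp only [c, decide_eq_true_eq] at hj ⊢
    omega
  have hrange {i : Fin M} (hi : i ∈ B) : i ∈ Set.range e := by
    rwa [range_orderEmbOfFin]
  obtain ⟨i, hiB, hin⟩ := hl
  obtain ⟨i', hi'B, hi'n⟩ := hr
  obtain ⟨j, rfl⟩ := hrange hiB
  obtain ⟨j', rfl⟩ := hrange hi'B
  have hpos : 0 < #{j | c j} := card_pos.mpr ⟨j, by simpa [c] using hin⟩
  have hlt : #{j | c j} < #B := by
    simpa using card_lt_card (filter_ssubset.mpr ⟨j', mem_univ _, by simpa [c] using hi'n⟩)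
  have hx : (fun j => if (e j).val < n then a else b) = fun j => if c j then a else b := by
    simp [c]
  change κ #B c _ = 0
  rw [hx, kappa_antitone_eq_kappaNM κ a b hc]
  exact hsmall _ _ hpos (by omega) (by omega)

end Cumulants

namespace Setoid

variable {n m : ℕ}

/-- `σ` on the first `n` points and `τ` on the last `m`, with no block meeting both halves. -/
def finAppend (σ : Setoid (Fin n)) (τ : Setoid (Fin m)) : Setoid (Fin (n + m)) :=
  ker (Fin.append (fun i => Sum.inl (Quotient.mk σ i)) (fun j => Sum.inr (Quotient.mk τ j)))

section finAppend

variable (σ : Setoid (Fin n)) (τ : Setoid (Fin m))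

@[simp]
theorem finAppend_castAdd_castAdd (i j : Fin n) :
    σ.finAppend τ (Fin.castAdd m i) (Fin.castAdd m j) ↔ σ i j := by
  rw [finAppend, ker_def]
  simp [Quotient.eq]

@[simp]
theorem finAppend_natAdd_natAdd (i j : Fin m) :
    σ.finAppend τ (Fin.natAdd n i) (Fin.natAdd n j) ↔ τ i j := by
  rw [finAppend, ker_def]
  simp [Quotient.eq]

@[simp]
theorem not_finAppend_castAdd_natAdd (i : Fin n) (j : Fin m) :
    ¬ σ.finAppend τ (Fin.castAdd m i) (Fin.natAdd n j) := by
  rw [finAppend, ker_def]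
  simp

@[simp]
theorem not_finAppend_natAdd_castAdd (i : Fin m) (j : Fin n) :
    ¬ σ.finAppend τ (Fin.natAdd n i) (Fin.castAdd m j) := by
  rw [finAppend, ker_def]
  simp

@[simp]
theorem comap_castAdd_finAppend : (σ.finAppend τ).comap (Fin.castAdd m) = σ := by
  ext; simp [comap_rel]

@[simp]
theorem comap_natAdd_finAppend : (σ.finAppend τ).comap (Fin.natAdd n) = τ := by
  ext; simp [comap_rel]

theorem filter_finAppend_castAdd (i : Fin n) :
    univ.filter (σ.finAppend τ (Fin.castAdd m i)) =
      (univ.filter (σ i)).map (Fin.castAddEmb m) := by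
  ext j
  induction j using Fin.addCases <;> simp

theorem filter_finAppend_natAdd (i : Fin m) :
    univ.filter (σ.finAppend τ (Fin.natAdd n i)) =
      (univ.filter (τ i)).map (Fin.natAddEmb n) := by
  ext j
  induction j using Fin.addCases <;> simp

theorem blocksOf_finAppend :
    blocksOf (σ.finAppend τ) = (blocksOf σ).image (Finset.map (Fin.castAddEmb m)) ∪
      (blocksOf τ).image (Finset.map (Fin.natAddEmb n)) := by
  ext B
  simp only [blocksOf, mem_union, mem_image, mem_univ, true_and, exists_exists_eq_and]
  constructor
  · rintro ⟨i, rfl⟩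
    induction i using Fin.addCases with
    | left i => exact Or.inl ⟨i, (filter_finAppend_castAdd σ τ i).symm⟩
    | right i => exact Or.inr ⟨i, (filter_finAppend_natAdd σ τ i).symm⟩
  · rintro (⟨i, rfl⟩ | ⟨i, rfl⟩)
    · exact ⟨_, filter_finAppend_castAdd σ τ i⟩
    · exact ⟨_, filter_finAppend_natAdd σ τ i⟩

end finAppend

def SplitsAt {M : ℕ} (n : ℕ) (s : Setoid (Fin M)) : Prop :=
  ∀ i j, s i j → (i.val < n ↔ j.val < n)

theorem finAppend_splitsAt (σ : Setoid (Fin n)) (τ : Setoid (Fin m)) :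
    SplitsAt n (σ.finAppend τ) := by
  intro i j
  induction i using Fin.addCases <;> induction j using Fin.addCases <;> simp

theorem finAppend_comap_of_splitsAt {s : Setoid (Fin (n + m))} (hs : SplitsAt n s) :
    (s.comap (Fin.castAdd m)).finAppend (s.comap (Fin.natAdd n)) = s := by
  ext i j
  have := hs i j
  induction i using Fin.addCases <;> induction j using Fin.addCases <;> simp_all [comap_rel]

theorem blocksOf_top {M : ℕ} (hM : 0 < M) : blocksOf (⊤ : Setoid (Fin M)) = {univ} := by
  have : (univ : Finset (Fin M)).Nonempty := univ_nonempty_iff.mpr ⟨⟨0, hM⟩⟩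
  simp [blocksOf, top_def, image_const this]

end Setoid

section NonCrossing

variable {n m : ℕ}

theorem NonCrossingOn.comap {α β : Type*} {k : α → ℤ} {k' : β → ℤ} {s : Setoid β}
    (hs : NonCrossingOn k' s) (f : α → β) (hf : ∀ x y, k x < k y → k' (f x) < k' (f y)) :
    NonCrossingOn k (s.comap f) :=
  fun a b c d hab hbc hcd hac hbd =>
    hs (f a) (f b) (f c) (f d) (hf _ _ hab) (hf _ _ hbc) (hf _ _ hcd) hac hbd

theorem NonCrossingOn.comap_castAdd {s : Setoid (Fin (n + m))}
    (hs : NonCrossingOn (biKey fun i : Fin (n + m) => decide (i.val < n)) s) :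
    NonCrossingOn (biKey fun _ : Fin n => true) (s.comap (Fin.castAdd m)) :=
  hs.comap _ fun x y => by simp [biKey]

theorem NonCrossingOn.comap_natAdd {s : Setoid (Fin (n + m))}
    (hs : NonCrossingOn (biKey fun i : Fin (n + m) => decide (i.val < n)) s) :
    NonCrossingOn (biKey fun _ : Fin m => false) (s.comap (Fin.natAdd n)) :=
  hs.comap _ fun x y => by simp [biKey]

theorem NonCrossingOn.finAppend {σ : Setoid (Fin n)} {τ : Setoid (Fin m)}
    (hσ : NonCrossingOn (biKey fun _ : Fin n => true) σ)
    (hτ : NonCrossingOn (biKey fun _ : Fin m => false) τ) :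
    NonCrossingOn (biKey fun i : Fin (n + m) => decide (i.val < n)) (σ.finAppend τ) := by
  intro p q r s hpq hqr hrs hpr hqs
  induction p using Fin.addCases <;> induction q using Fin.addCases <;>
    induction r using Fin.addCases <;> induction s using Fin.addCases <;>
    simp [biKey] at hpq hqr hrs hpr hqs ⊢
  case left.left.left.left =>
    exact hσ _ _ _ _ (by simpa [biKey]) (by simpa [biKey]) (by simpa [biKey]) hpr hqs
  case right.right.right.right =>
    exact hτ _ _ _ _ (by simpa [biKey]) (by simpa [biKey]) (by simpa [biKey]) hpr hqs
  -- a crossing between the halves is impossible: every left key is below every right key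
  case left.right.left.right _ q r _ => have := q.isLt; have := r.isLt; omega
  case right.left.right.left _ q r _ => have := q.isLt; have := r.isLt; omega

end NonCrossing

abbrev BiNC {M : ℕ} (χ : Fin M → Bool) := {s : Setoid (Fin M) // NonCrossingOn (biKey χ) s}

section MomentCumulant

variable {A : Type*} (κ : ∀ m : ℕ, (Fin m → Bool) → (Fin m → A) → ℂ) (a b : A)

theorem prod_blockCum_finAppend {n m : ℕ} (σ : Setoid (Fin n)) (τ : Setoid (Fin m)) :
    ∏ B ∈ blocksOf (σ.finAppend τ),
        blockCum κ (fun i => decide (i.val < n)) (fun i => if i.val < n then a else b) B =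
      (∏ B ∈ blocksOf σ, κ #B (fun _ => true) (fun _ => a)) *
        ∏ B ∈ blocksOf τ, κ #B (fun _ => false) (fun _ => b) := by
  have hdisj : Disjoint ((blocksOf σ).image (map (Fin.castAddEmb m)))
      ((blocksOf τ).image (map (Fin.natAddEmb n))) := by
    simp only [disjoint_left, blocksOf, mem_image, mem_univ, true_and]
    rintro _ ⟨_, ⟨i, rfl⟩, rfl⟩ ⟨B, -, hB⟩
    have : Fin.castAdd m i ∈ B.map (Fin.natAddEmb n) := hB ▸ by simp
    simp at this
  rw [Setoid.blocksOf_finAppend, prod_union hdisj,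
    prod_image fun _ _ _ _ h => map_injective _ h, prod_image fun _ _ _ _ h => map_injective _ h]
  congr 1 <;>
    refine prod_congr rfl fun B _ => blockCum_eq_of_forall_mem κ (card_map _) ?_ ?_ <;> simp

theorem sum_splitsAt_prod_blockCum (n m : ℕ) :
    ∑ π : BiNC (fun i : Fin (n + m) => decide (i.val < n))
        with Setoid.SplitsAt n π.1,
        ∏ B ∈ blocksOf π.1,
          blockCum κ (fun i => decide (i.val < n)) (fun i => if i.val < n then a else b) B =
      (∑ π : BiNC (fun _ : Fin n => true),
          ∏ B ∈ blocksOf π.1, κ #B (fun _ => true) (fun _ => a)) *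
        ∑ π : BiNC (fun _ : Fin m => false),
          ∏ B ∈ blocksOf π.1, κ #B (fun _ => false) (fun _ => b) := by
  rw [sum_mul_sum, ← sum_product']
  refine sum_nbij' (fun π => (⟨_, π.2.comap_castAdd⟩, ⟨_, π.2.comap_natAdd⟩))
    (fun στ => ⟨_, στ.1.2.finAppend στ.2.2⟩) (by simp) (fun στ _ => ?_)
    (fun π hπ => ?_) (fun στ _ => by simp) (fun π hπ => ?_)
  · simpa using Setoid.finAppend_splitsAt στ.1.1 στ.2.1
  · exact Subtype.ext (Setoid.finAppend_comap_of_splitsAt (mem_filter.mp hπ).2)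
  · conv_lhs => rw [← Setoid.finAppend_comap_of_splitsAt (mem_filter.mp hπ).2]
    exact prod_blockCum_finAppend κ a b _ _

theorem sum_not_splitsAt_prod_blockCum {n m : ℕ} (hn : 1 ≤ n) (hm : 1 ≤ m)
    (hsmall : ∀ n' m', 1 ≤ n' → 1 ≤ m' → n' + m' < n + m → kappaNM κ a b n' m' = 0) :
    ∑ π : BiNC (fun i : Fin (n + m) => decide (i.val < n))
        with ¬ Setoid.SplitsAt n π.1,
        ∏ B ∈ blocksOf π.1,
          blockCum κ (fun i => decide (i.val < n)) (fun i => if i.val < n then a else b) B =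
      kappaNM κ a b n m := by
  have htop : ¬ Setoid.SplitsAt n (⊤ : Setoid (Fin (n + m))) := fun h => by
    have := h ⟨0, by omega⟩ ⟨n, by omega⟩ trivial
    simp only [lt_self_iff_false, iff_false, not_lt] at this
    omega
  rw [sum_eq_single_of_mem ⟨⊤, fun _ _ _ _ _ _ _ _ _ => trivial⟩ (by simpa using htop)]
  · rw [Setoid.blocksOf_top (by omega), prod_singleton, blockCum_univ]
    rfl
  rintro ⟨s, hsNC⟩ hs hne
  obtain ⟨i, j, hij, hi, hj⟩ : ∃ i j, s i j ∧ i.val < n ∧ n ≤ j.val := by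
    obtain ⟨i, j, hij, hsplit⟩ : ∃ i j, s i j ∧ ¬ (i.val < n ↔ j.val < n) := by
      simpa [Setoid.SplitsAt] using (mem_filter.mp hs).2
    by_cases hi : i.val < n
    · exact ⟨i, j, hij, hi, not_lt.mp fun hj => hsplit (iff_of_true hi hj)⟩
    · exact ⟨j, i, s.iseqv.symm hij, not_not.mp fun hj => hsplit (iff_of_false hi hj),
        not_lt.mp hi⟩
  have hB : univ.filter (s i) ∈ blocksOf s := mem_image_of_mem _ (mem_univ i)
  refine prod_eq_zero hB (blockCum_eq_zero_of_mixed κ a b hsmall ?_ ⟨i, by simp, hi⟩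
    ⟨j, by simpa using hij, hj⟩)
  obtain ⟨x, hx⟩ : ∃ x, ¬ s i x := by
    by_contra! h
    exact hne (Subtype.ext (Setoid.ext fun x y =>
      by simpa [Setoid.top_def] using s.iseqv.trans (s.iseqv.symm (h x)) (h y)))
  simpa using card_lt_card (filter_ssubset.mpr ⟨x, mem_univ x, hx⟩)

end MomentCumulant

namespace BiMomCum

variable {A : Type*} [Ring A] [Algebra ℂ A] {φ : A →ₗ[ℂ] ℂ}
  {κ : ∀ m : ℕ, (Fin m → Bool) → (Fin m → A) → ℂ}

theorem apply_pow (h : BiMomCum φ κ) (c : Bool) (x : A) (k : ℕ) :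
    φ (x ^ k) = ∑ π : BiNC (fun _ : Fin k => c),
      ∏ B ∈ blocksOf π.1, κ #B (fun _ => c) (fun _ => x) := by
  have := h k (fun _ => c) (fun _ => x)
  rwa [List.ofFn_const, List.prod_replicate] at this

theorem apply_pow_mul_pow (h : BiMomCum φ κ) (a b : A) {n m : ℕ} (hn : 1 ≤ n) (hm : 1 ≤ m)
    (hsmall : ∀ n' m', 1 ≤ n' → 1 ≤ m' → n' + m' < n + m → kappaNM κ a b n' m' = 0) :
    φ (a ^ n * b ^ m) = φ (a ^ n) * φ (b ^ m) + kappaNM κ a b n m := by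
  have := h (n + m) (fun i => decide (i.val < n)) (fun i => if i.val < n then a else b)
  rw [List.prod_ofFn_ite_lt] at this
  rw [this, h.apply_pow true a, h.apply_pow false b, ← sum_splitsAt_prod_blockCum,
    ← sum_not_splitsAt_prod_blockCum κ a b hn hm hsmall]
  exact (sum_filter_add_sum_filter_not _ _ _).symm

theorem kappaNM_eq_zero_of_factorizing (h : BiMomCum φ κ) {a b : A}
    (hab : ∀ n m : ℕ, φ (a ^ n * b ^ m) = φ (a ^ n) * φ (b ^ m)) {n m : ℕ} (hn : 1 ≤ n)
    (hm : 1 ≤ m) : kappaNM κ a b n m = 0 := by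
  induction hN : n + m using Nat.strong_induction_on generalizing n m with
  | _ N ih =>
    subst hN
    have := h.apply_pow_mul_pow a b hn hm fun n' m' hn' hm' hlt => ih _ hlt hn' hm' rfl
    rwa [hab, left_eq_add] at this

end BiMomCum

theorem coeff_mvMk (f : (Fin 2 →₀ ℕ) → ℂ) (d : Fin 2 →₀ ℕ) :
    MvPowerSeries.coeff d (mvMk f) = f d :=
  rfl

theorem mvcomp_zero (g₀ g₁ : MvPowerSeries (Fin 2) ℂ) : mvcomp 0 g₀ g₁ = 0 := by
  ext d
  simp [mvcomp, coeff_mvMk]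

theorem KabSeries_eq_zero {A : Type*} {κ : ∀ m : ℕ, (Fin m → Bool) → (Fin m → A) → ℂ}
    {a b : A} (h : ∀ n m : ℕ, 1 ≤ n → 1 ≤ m → kappaNM κ a b n m = 0) :
    KabSeries κ a b = 0 := by
  ext d
  rw [KabSeries, coeff_mvMk, MvPowerSeries.coeff_zero]
  split_ifs with hd
  exacts [h _ _ hd.1 hd.2, rfl]

theorem mixed_cumulants_vanish_of_factorizing_general
    (A : Type*) [Ring A] [Algebra ℂ A] (φ : A →ₗ[ℂ] ℂ) (a b : A)
    (κ : ∀ m : ℕ, (Fin m → Bool) → (Fin m → A) → ℂ) (hBMC : BiMomCum φ κ)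
    (hindep : ∀ n m : ℕ, φ (a ^ n * b ^ m) = φ (a ^ n) * φ (b ^ m)) :
    (∀ n m : ℕ, 1 ≤ n → 1 ≤ m → kappaNM κ a b n m = 0) ∧
    KabSeries κ a b = 0 ∧
    ∀ Icb : PowerSeries ℂ,
      pscomp (phiSeries (rightCumSeq κ b)) Icb = PowerSeries.X →
      mvcomp (KabSeries κ a b) (MvPowerSeries.X 0) (toMv1 Icb) = 0 := by
  have hκ : ∀ n m : ℕ, 1 ≤ n → 1 ≤ m → kappaNM κ a b n m = 0 :=
    fun _ _ => hBMC.kappaNM_eq_zero_of_factorizing hindep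
  have hK : KabSeries κ a b = 0 := KabSeries_eq_zero hκ
  exact ⟨hκ, hK, fun _ _ => by rw [hK, mvcomp_zero]⟩

/-- If `a, b ∈ A` satisfy `φ(aⁿbᵐ) = φ(aⁿ)·φ(bᵐ)` for all
`n, m ≥ 0` and `φ(b) ≠ 0`, then all mixed `(ℓ,r)`-cumulants `κ_{n,m}(a,b)` with
`n, m ≥ 1` vanish; hence `K_{a,b}(z,w) = 0` and `T_{a,b}(z,w) = 1` (i.e.
`w·(T_{a,b} − 1) = K_{a,b}(z, c_b^{⟨−1⟩}(w)) = 0`). -/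
theorem mixed_cumulants_vanish_of_factorizing
    (A : Type*) [Ring A] [Algebra ℂ A] (φ : A →ₗ[ℂ] ℂ) (hφ1 : φ 1 = 1) (a b : A)
    (κ : ∀ m : ℕ, (Fin m → Bool) → (Fin m → A) → ℂ) (hBMC : BiMomCum φ κ)
    (hb : φ b ≠ 0)
    (hindep : ∀ n m : ℕ, φ (a ^ n * b ^ m) = φ (a ^ n) * φ (b ^ m)) :
    (∀ n m : ℕ, 1 ≤ n → 1 ≤ m → kappaNM κ a b n m = 0) ∧
    KabSeries κ a b = 0 ∧
    ∀ Icb : PowerSeries ℂ,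
      pscomp (phiSeries (rightCumSeq κ b)) Icb = PowerSeries.X →
      mvcomp (KabSeries κ a b) (MvPowerSeries.X 0) (toMv1 Icb) = 0 :=
  mixed_cumulants_vanish_of_factorizing_general A φ a b κ hBMC hindep

end
end
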